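/- The Foster graph admits no coherent 10-cycle orientation of level 5; that is, there is no choice, for each 10-cycle of the Foster graph, of one of its two directions such that every path v_0, v_1, v_2, v_3, v_4 on 5 distinct vertices with consecutive vertices adjacent occurs as a consecutive segment of exactly one chosen directed 10-cycle. -/

import Mathlib

/-!
Four 10-cycles `A, B, C, D` of the Foster graph are arranged so that consecutive ones (cyclically)
share a 5-path. A coherent orientation cannot orient two different cycles so that both traverse a
shared path in the same direction. So sharing a path in the same sense forces opposite orientations,
and sharing it in opposite senses forces equal ones. Around `A, B, C, D` this yields three
"opposite" constraints and one "equal" constraint, and no choice of orientations satisfies them.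
-/

/-- A directed `g`-cycle of a simple graph `G`: an injective map `c : ZMod g → V`
with `c i` adjacent to `c (i+1)` for all `i`. -/
def IsDirCycleOn {V : Type*} (G : SimpleGraph V) (g : ℕ) (c : ZMod g → V) : Prop :=
  Function.Injective c ∧ ∀ i : ZMod g, G.Adj (c i) (c (i + 1))

/-- A sequence of `k` distinct vertices with consecutive vertices adjacent. -/
def IsPathSeq {V : Type*} (G : SimpleGraph V) (k : ℕ) (v : Fin k → V) : Prop :=
  Function.Injective v ∧ ∀ (j : ℕ) (h : j + 1 < k),
    G.Adj (v ⟨j, Nat.lt_of_succ_lt h⟩) (v ⟨j + 1, h⟩)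

/-- A coherent `g`-cycle orientation of level `k` of `G`: a set `D` of directed
`g`-cycles of `G` containing, for every `g`-cycle of `G`, exactly one of its two
directions (one representative up to rotation), and such that every sequence of `k`
distinct vertices `v 0, …, v (k-1)` with consecutive vertices adjacent occurs as a
consecutive segment `(c i, c (i+1), …, c (i+k-1))` of exactly one `c ∈ D`. -/
def IsCoherentOrientation {V : Type*} (G : SimpleGraph V) (g k : ℕ)
    (D : Set (ZMod g → V)) : Prop :=
  (∀ c ∈ D, IsDirCycleOn G g c) ∧
  (∀ c : ZMod g → V, IsDirCycleOn G g c →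
    ∃! c', c' ∈ D ∧
      ((∃ r : ZMod g, ∀ i, c' i = c (i + r)) ∨ (∃ r : ZMod g, ∀ i, c' i = c (r - i)))) ∧
  (∀ v : Fin k → V, IsPathSeq G k v →
    ∃! c, c ∈ D ∧ ∃ i : ZMod g, ∀ j : Fin k, c (i + ((j : ℕ) : ZMod g)) = v j)

/-- The Foster graph: vertex set `ZMod 90`, `i` adjacent to `i+1`, together with the
extra edges `{6x+4, 6x+13}`, `{6x, 6x+17}`, `{6x+2, 6x+39}` for every `x`. -/
def fosterGraph : SimpleGraph (ZMod 90) :=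
  SimpleGraph.fromRel (fun i j =>
    j = i + 1 ∨ ∃ x : ZMod 90,
      (i = 6 * x + 4 ∧ j = 6 * x + 13) ∨ (i = 6 * x ∧ j = 6 * x + 17) ∨
      (i = 6 * x + 2 ∧ j = 6 * x + 39))

section CoherentOrientation

variable {V : Type*} {g k : ℕ}

def cycleRev (c : ZMod g → V) : ZMod g → V := fun i => c (-i)

def IsRotation (c' c : ZMod g → V) : Prop := ∃ r : ZMod g, ∀ i, c' i = c (i + r)

def HasSegment (c : ZMod g → V) (P : Fin k → V) : Prop :=
  ∃ i : ZMod g, ∀ j : Fin k, c (i + ((j : ℕ) : ZMod g)) = P j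

/-- `D` orients the cycle underlying `c` along `c`. -/
def MemUpToRotation (D : Set (ZMod g → V)) (c : ZMod g → V) : Prop :=
  ∃ e ∈ D, IsRotation e c

@[simp]
theorem cycleRev_cycleRev (c : ZMod g → V) : cycleRev (cycleRev c) = c := by
  funext i
  simp [cycleRev]

@[simp]
theorem range_cycleRev (c : ZMod g → V) : Set.range (cycleRev c) = Set.range c :=
  (Equiv.neg (ZMod g)).surjective.range_comp c

theorem IsRotation.range_eq {c' c : ZMod g → V} (h : IsRotation c' c) :
    Set.range c' = Set.range c := by
  obtain ⟨r, hr⟩ := h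
  rw [funext hr]
  exact (Equiv.addRight r).surjective.range_comp c

theorem isRotation_cycleRev_of_reflection {c' c : ZMod g → V} {r : ZMod g}
    (h : ∀ i, c' i = c (r - i)) : IsRotation c' (cycleRev c) :=
  ⟨-r, fun i => (h i).trans (congrArg c (by ring))⟩

theorem HasSegment.of_isRotation {c' c : ZMod g → V} {P : Fin k → V}
    (hP : HasSegment c P) (h : IsRotation c' c) : HasSegment c' P := by
  obtain ⟨i, hi⟩ := hP
  obtain ⟨r, hr⟩ := h
  exact ⟨i - r, fun j => (hr _).trans ((congrArg c (by ring)).trans (hi j))⟩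

theorem HasSegment.cycleRev {c : ZMod g → V} {P : Fin k → V} (hP : HasSegment c P) :
    HasSegment (cycleRev c) (P ∘ Fin.rev) := by
  obtain ⟨i, hi⟩ := hP
  refine ⟨-(i + ((k - 1 : ℕ) : ZMod g)), fun j => (congrArg c ?_).trans (hi j.rev)⟩
  have hj : (j : ℕ) ≤ k - 1 := Nat.le_pred_of_lt j.isLt
  rw [Fin.val_rev, show k - (j + 1) = k - 1 - j by omega, Nat.cast_sub hj]
  ring

theorem IsPathSeq.comp_rev {G : SimpleGraph V} {P : Fin k → V} (hP : IsPathSeq G k P) :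
    IsPathSeq G k (P ∘ Fin.rev) := by
  refine ⟨hP.1.comp Fin.rev_injective, fun j h => ?_⟩
  convert (hP.2 (k - (j + 2)) (by omega)).symm using 2 <;>
    exact congrArg P (Fin.ext (by grind))

theorem isPathSeq_succ_iff {G : SimpleGraph V} {v : Fin (k + 1) → V} :
    IsPathSeq G (k + 1) v ↔
      Function.Injective v ∧ ∀ j : Fin k, G.Adj (v j.castSucc) (v j.succ) :=
  and_congr_right fun _ =>
    ⟨fun h j => h j (by omega), fun h j hj => h ⟨j, by omega⟩⟩

namespace IsCoherentOrientation

variable {G : SimpleGraph V} {D : Set (ZMod g → V)}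

theorem memUpToRotation_or_cycleRev (hD : IsCoherentOrientation G g k D) {c : ZMod g → V}
    (hc : IsDirCycleOn G g c) : MemUpToRotation D c ∨ MemUpToRotation D (cycleRev c) := by
  obtain ⟨e, ⟨he, ⟨r, hr⟩ | ⟨r, hr⟩⟩, -⟩ := hD.2.1 c hc
  · exact Or.inl ⟨e, he, r, hr⟩
  · exact Or.inr ⟨e, he, isRotation_cycleRev_of_reflection hr⟩

theorem not_memUpToRotation_and (hD : IsCoherentOrientation G g k D) {c₁ c₂ : ZMod g → V}
    (hne : Set.range c₁ ≠ Set.range c₂) {P : Fin k → V} (hP : IsPathSeq G k P)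
    (h₁ : HasSegment c₁ P) (h₂ : HasSegment c₂ P) :
    ¬ (MemUpToRotation D c₁ ∧ MemUpToRotation D c₂) := by
  rintro ⟨⟨e₁, he₁, hr₁⟩, ⟨e₂, he₂, hr₂⟩⟩
  obtain ⟨e, -, huniq⟩ := hD.2.2 P hP
  have heq : e₁ = e₂ :=
    (huniq e₁ ⟨he₁, h₁.of_isRotation hr₁⟩).trans (huniq e₂ ⟨he₂, h₂.of_isRotation hr₂⟩).symm
  exact hne (hr₁.range_eq.symm.trans (heq ▸ hr₂.range_eq))

theorem orientations_ne_of_hasSegment (hD : IsCoherentOrientation G g k D)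
    {c₁ c₂ : ZMod g → V} (hne : Set.range c₁ ≠ Set.range c₂) {P : Fin k → V}
    (hP : IsPathSeq G k P) (h₁ : HasSegment c₁ P) (h₂ : HasSegment c₂ P) :
    ¬ (MemUpToRotation D c₁ ∧ MemUpToRotation D c₂) ∧
      ¬ (MemUpToRotation D (cycleRev c₁) ∧ MemUpToRotation D (cycleRev c₂)) :=
  ⟨hD.not_memUpToRotation_and hne hP h₁ h₂,
    hD.not_memUpToRotation_and (by simpa using hne) hP.comp_rev h₁.cycleRev h₂.cycleRev⟩

theorem orientations_eq_of_hasSegment_cycleRev (hD : IsCoherentOrientation G g k D)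
    {c₁ c₂ : ZMod g → V} (hne : Set.range c₁ ≠ Set.range c₂) {P : Fin k → V}
    (hP : IsPathSeq G k P) (h₁ : HasSegment c₁ P) (h₂ : HasSegment (cycleRev c₂) P) :
    ¬ (MemUpToRotation D c₁ ∧ MemUpToRotation D (cycleRev c₂)) ∧
      ¬ (MemUpToRotation D (cycleRev c₁) ∧ MemUpToRotation D c₂) := by
  simpa using hD.orientations_ne_of_hasSegment (by simpa using hne) hP h₁ h₂

end IsCoherentOrientation

end CoherentOrientation

instance : DecidableRel fosterGraph.Adj := by
  unfold fosterGraph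
  infer_instance

def fosterCycleA : ZMod 10 → ZMod 90 := ![0, 1, 2, 3, 4, 5, 6, 7, 88, 89]
def fosterCycleB : ZMod 10 → ZMod 90 := ![2, 3, 4, 5, 6, 23, 24, 41, 40, 39]
def fosterCycleC : ZMod 10 → ZMod 90 := ![0, 1, 2, 39, 40, 41, 24, 25, 16, 17]
def fosterCycleD : ZMod 10 → ZMod 90 := ![0, 1, 2, 3, 4, 13, 14, 15, 16, 17]

def fosterPathAB : Fin 5 → ZMod 90 := ![2, 3, 4, 5, 6]
def fosterPathBC : Fin 5 → ZMod 90 := ![24, 41, 40, 39, 2]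
def fosterPathCD : Fin 5 → ZMod 90 := ![16, 17, 0, 1, 2]
def fosterPathAD : Fin 5 → ZMod 90 := ![0, 1, 2, 3, 4]

theorem isDirCycleOn_fosterCycleA : IsDirCycleOn fosterGraph 10 fosterCycleA :=
  ⟨by decide, by decide⟩
theorem isDirCycleOn_fosterCycleB : IsDirCycleOn fosterGraph 10 fosterCycleB :=
  ⟨by decide, by decide⟩
theorem isDirCycleOn_fosterCycleC : IsDirCycleOn fosterGraph 10 fosterCycleC :=
  ⟨by decide, by decide⟩
theorem isDirCycleOn_fosterCycleD : IsDirCycleOn fosterGraph 10 fosterCycleD :=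
  ⟨by decide, by decide⟩

theorem isPathSeq_fosterPathAB : IsPathSeq fosterGraph 5 fosterPathAB :=
  isPathSeq_succ_iff.2 (by decide)
theorem isPathSeq_fosterPathBC : IsPathSeq fosterGraph 5 fosterPathBC :=
  isPathSeq_succ_iff.2 (by decide)
theorem isPathSeq_fosterPathCD : IsPathSeq fosterGraph 5 fosterPathCD :=
  isPathSeq_succ_iff.2 (by decide)
theorem isPathSeq_fosterPathAD : IsPathSeq fosterGraph 5 fosterPathAD :=
  isPathSeq_succ_iff.2 (by decide)

/-- The Foster graph admits no coherent 10-cycle orientation of level 5. -/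
theorem foster_no_coherent_orientation :
    ¬ ∃ D : Set (ZMod 10 → ZMod 90), IsCoherentOrientation fosterGraph 10 5 D := by
  rintro ⟨D, hcoh⟩
  have hA := hcoh.memUpToRotation_or_cycleRev isDirCycleOn_fosterCycleA
  have hB := hcoh.memUpToRotation_or_cycleRev isDirCycleOn_fosterCycleB
  have hC := hcoh.memUpToRotation_or_cycleRev isDirCycleOn_fosterCycleC
  have hD := hcoh.memUpToRotation_or_cycleRev isDirCycleOn_fosterCycleD
  have hAB := hcoh.orientations_ne_of_hasSegment (c₁ := fosterCycleA) (c₂ := fosterCycleB)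
    (ne_of_mem_of_not_mem' (Set.mem_range_self 8) (by decide)) isPathSeq_fosterPathAB
    ⟨2, by decide⟩ ⟨0, by decide⟩
  have hBC := hcoh.orientations_eq_of_hasSegment_cycleRev (c₁ := fosterCycleB)
    (c₂ := fosterCycleC) (ne_of_mem_of_not_mem' (Set.mem_range_self 1) (by decide))
    isPathSeq_fosterPathBC ⟨6, by decide⟩ ⟨4, by decide⟩
  have hCD := hcoh.orientations_ne_of_hasSegment (c₁ := fosterCycleC) (c₂ := fosterCycleD)
    (ne_of_mem_of_not_mem' (Set.mem_range_self 3) (by decide)) isPathSeq_fosterPathCD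
    ⟨8, by decide⟩ ⟨8, by decide⟩
  have hAD := hcoh.orientations_ne_of_hasSegment (c₁ := fosterCycleA) (c₂ := fosterCycleD)
    (ne_of_mem_of_not_mem' (Set.mem_range_self 8) (by decide)) isPathSeq_fosterPathAD
    ⟨0, by decide⟩ ⟨0, by decide⟩
  grind
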